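/- Fix an integer M ≥ 1 and let R : (0,∞) → (0,∞) satisfy lim_{SNR→∞} R(SNR)/log₂(SNR) = M (pre-log equal to the maximum number of rounds). Then lim_{SNR→∞} E[X(R(SNR), SNR)] = M. -/

import Mathlib

open MeasureTheory ProbabilityTheory Real Filter Topology

/-- Number of IR H-ARQ rounds: `X(R, SNR) = min(M, min{m ≥ 1 : Σ_{i=1}^m log₂(1+SNR·Hᵢ) > R})`
(realized as the infimum of `{M} ∪ {m ≥ 1 : accumulated mutual information exceeds R}`). -/
noncomputable def numRounds {Ω : Type*} (H : ℕ → Ω → ℝ) (M : ℕ) (snr R : ℝ) (ω : Ω) : ℕ :=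
  sInf ({M} ∪ {m | 1 ≤ m ∧ R < ∑ i ∈ Finset.range m, Real.logb 2 (1 + snr * H i ω)})

/-!
Always `X ≤ M`, and `X = M` as soon as each of the first `M - 1` rounds carries at most
`R / (M - 1)` bits, i.e. as soon as `0 ≤ Hᵢ ≤ T := (2 ^ (R / (M - 1)) - 1) / SNR` for `i < M - 1`.
Since `R ≈ M log₂ SNR` and `M / (M - 1) > 1`, the threshold `T` tends to infinity, so by the
union bound `P(X < M) → 0`, and the bounded variable `X` has `E[X] → M`.
-/

open Set

theorem tendsto_integral_of_eq_off_of_tendsto_measure {ι Ω : Type*} [MeasurableSpace Ω]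
    {μ : Measure Ω} [IsProbabilityMeasure μ] {l : Filter ι} {f : ι → Ω → ℝ} {B : ι → Set Ω}
    {c : ℝ}
    (hf : ∀ s, AEStronglyMeasurable (f s) μ) (hf0 : ∀ s ω, 0 ≤ f s ω) (hfc : ∀ s ω, f s ω ≤ c)
    (hB : ∀ s, MeasurableSet (B s)) (hfB : ∀ᶠ s in l, ∀ ω ∉ B s, f s ω = c)
    (hμB : Tendsto (fun s => μ (B s)) l (𝓝 0)) :
    Tendsto (fun s => ∫ ω, f s ω ∂μ) l (𝓝 c) := by
  have hint (s : ι) : Integrable (f s) μ :=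
    .of_bound (hf s) c (ae_of_all _ fun ω => by simpa [abs_of_nonneg (hf0 s ω)] using hfc s ω)
  have hlower : Tendsto (fun s => c * μ.real (B s)ᶜ) l (𝓝 c) := by
    have hreal : Tendsto (fun s => μ.real (B s)) l (𝓝 0) :=
      (ENNReal.tendsto_toReal ENNReal.zero_ne_top).comp hμB
    simpa [probReal_compl_eq_one_sub (hB _)] using (hreal.const_sub 1).const_mul c
  refine tendsto_of_tendsto_of_tendsto_of_le_of_le' hlower tendsto_const_nhds ?_
    (Eventually.of_forall fun s => ?_)
  · filter_upwards [hfB] with s hs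
    calc c * μ.real (B s)ᶜ ≤ ∫ ω in (B s)ᶜ, f s ω ∂μ :=
          setIntegral_ge_of_const_le_real (hB s).compl (measure_ne_top _ _)
            (fun ω hω => (hs ω hω).ge) (hint s).integrableOn
      _ ≤ ∫ ω, f s ω ∂μ := setIntegral_le_integral (hint s) (ae_of_all _ (hf0 s))
  · calc ∫ ω, f s ω ∂μ ≤ ∫ _, c ∂μ := integral_mono (hint s) (integrable_const c) (hfc s)
      _ = c := by simp

theorem tendsto_measure_compl_Icc_atTop {ν : Measure ℝ} [IsFiniteMeasure ν] (a : ℝ) :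
    Tendsto (fun t => ν (Icc a t)ᶜ) atTop (𝓝 (ν (Iio a))) := by
  have hInter : ⋂ t, (Icc a t)ᶜ = Iio a := by
    ext x
    simp only [mem_iInter, mem_compl_iff, mem_Icc, not_and, not_le, mem_Iio]
    exact ⟨fun h => not_le.1 fun hax => (h x hax).false, fun hxa t hat => absurd hat hxa.not_ge⟩
  rw [← hInter]
  exact tendsto_measure_iInter_atTop (fun _ => measurableSet_Icc.compl.nullMeasurableSet)
    (fun _ _ hst => compl_subset_compl.2 (Icc_subset_Icc_right hst)) ⟨0, measure_ne_top _ _⟩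

theorem gammaMeasure_Iio_zero (a r : ℝ) : gammaMeasure a r (Iio 0) = 0 := by
  rw [gammaMeasure, withDensity_apply _ measurableSet_Iio]
  exact setLIntegral_eq_zero measurableSet_Iio fun _ hx => gammaPDF_of_neg hx

theorem tendsto_expMeasure_compl_Icc_zero_atTop {r : ℝ} (hr : 0 < r) :
    Tendsto (fun t => expMeasure r (Icc 0 t)ᶜ) atTop (𝓝 0) := by
  have := isProbabilityMeasure_expMeasure hr
  simpa only [expMeasure, gammaMeasure_Iio_zero] using
    tendsto_measure_compl_Icc_atTop (ν := expMeasure r) 0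

theorem tendsto_measure_biUnion_preimage_compl_Icc {ι Ω : Type*} [MeasurableSpace Ω]
    {μ : Measure Ω} {H : ℕ → Ω → ℝ} (hmeas : ∀ i, Measurable (H i))
    (hdist : ∀ i, Measure.map (H i) μ = expMeasure 1) {n : ℕ} {l : Filter ι} {T : ι → ℝ}
    (hT : 0 < n → Tendsto T l atTop) :
    Tendsto (fun s => μ (⋃ i ∈ Finset.range n, H i ⁻¹' (Icc 0 (T s))ᶜ)) l (𝓝 0) := by
  have hsum : Tendsto (fun s => ∑ i ∈ Finset.range n, μ (H i ⁻¹' (Icc 0 (T s))ᶜ)) l (𝓝 0) := by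
    simpa using tendsto_finsetSum (f := fun i s => μ (H i ⁻¹' (Icc 0 (T s))ᶜ))
      (a := fun _ => 0) (Finset.range n) fun i hi => by
        simp_rw [← Measure.map_apply (hmeas i) measurableSet_Icc.compl, hdist i]
        exact (tendsto_expMeasure_compl_Icc_zero_atTop one_pos).comp
          (hT (by rw [Finset.mem_range] at hi; omega))
  exact tendsto_of_tendsto_of_tendsto_of_le_of_le tendsto_const_nhds hsum (fun _ => bot_le)
    fun _ => measure_biUnion_finset_le _ _

theorem tendsto_two_rpow_sub_one_div_atTop {R : ℝ → ℝ} {L c : ℝ} (hc : 0 < c) (hcL : c < L)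
    (hR : Tendsto (fun s => R s / logb 2 s) atTop (𝓝 L)) :
    Tendsto (fun s => (2 ^ (R s / c) - 1) / s) atTop atTop := by
  -- `(2 ^ (R / c) - 1) / s = 2 ^ (R / c - log₂ s) - s⁻¹`,
  -- and `R / c - log₂ s = log₂ s * (R / (c log₂ s) - 1)` with `L / c - 1 > 0`
  have hgap : Tendsto (fun s => R s / c - logb 2 s) atTop atTop := by
    refine ((tendsto_logb_atTop one_lt_two).atTop_mul_pos (sub_pos.2 ((one_lt_div hc).2 hcL))
      ((hR.div_const c).sub_const 1)).congr' ?_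
    filter_upwards [eventually_gt_atTop 1] with s hs
    have := (logb_pos one_lt_two hs).ne'
    field_simp
  refine (((tendsto_rpow_atTop_of_base_gt_one 2 one_lt_two).comp hgap).atTop_add
    tendsto_inv_atTop_zero.neg).congr' ?_
  filter_upwards [eventually_gt_atTop 0] with s hs
  rw [Function.comp_apply, rpow_sub two_pos, rpow_logb two_pos (by norm_num) hs]
  field_simp
  ring

theorem logb_one_add_mul_le {snr a x : ℝ} (hsnr : 0 < snr) (hx0 : 0 ≤ x)
    (hx : x ≤ (2 ^ a - 1) / snr) : logb 2 (1 + snr * x) ≤ a := by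
  rw [logb_le_iff_le_rpow one_lt_two (by positivity)]
  rw [le_div_iff₀ hsnr] at hx
  linarith

section numRounds

variable {Ω : Type*} {H : ℕ → Ω → ℝ} {M : ℕ} {snr R : ℝ} {ω : Ω}

theorem numRounds_le : numRounds H M snr R ω ≤ M :=
  Nat.sInf_le (Or.inl rfl)

theorem numRounds_eq_of_forall_sum_le
    (h : ∀ m, 1 ≤ m → m < M → ∑ i ∈ Finset.range m, logb 2 (1 + snr * H i ω) ≤ R) :
    numRounds H M snr R ω = M := by
  refine le_antisymm numRounds_le (le_csInf ⟨M, Or.inl rfl⟩ ?_)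
  rintro m (rfl | ⟨hm1, hR⟩)
  · exact le_rfl
  · by_contra! hmM
    exact (h m hm1 hmM).not_gt hR

theorem numRounds_eq_of_forall_logb_le (hR : 0 ≤ R)
    (h : ∀ i < M - 1, logb 2 (1 + snr * H i ω) ≤ R / (M - 1 : ℕ)) :
    numRounds H M snr R ω = M := by
  refine numRounds_eq_of_forall_sum_le fun m hm1 hmM => ?_
  have hpos : (0 : ℝ) < (M - 1 : ℕ) := by exact_mod_cast (by omega : 0 < M - 1)
  calc ∑ i ∈ Finset.range m, logb 2 (1 + snr * H i ω) ≤ m * (R / (M - 1 : ℕ)) := by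
        simpa using Finset.sum_le_card_nsmul (Finset.range m) _ _ fun i hi =>
          h i (by rw [Finset.mem_range] at hi; omega)
    _ ≤ (M - 1 : ℕ) * (R / (M - 1 : ℕ)) := by
        gcongr
        exact_mod_cast (by omega : m ≤ M - 1)
    _ = R := mul_div_cancel₀ _ hpos.ne'

theorem measurable_numRounds [MeasurableSpace Ω] (hH : ∀ i, Measurable (H i)) :
    Measurable (numRounds H M snr R) := by
  classical
  have hsum (m : ℕ) : Measurable fun ω => ∑ i ∈ Finset.range m, logb 2 (1 + snr * H i ω) := by
    simp only [logb]
    fun_prop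
  have hset (n : ℕ) : MeasurableSet {ω | n = M ∨ 1 ≤ n ∧ R < ∑ i ∈ Finset.range n,
      logb 2 (1 + snr * H i ω)} :=
    (MeasurableSet.const _).union ((MeasurableSet.const _).inter
      (measurableSet_lt measurable_const (hsum n)))
  convert Measurable.find (f := fun n _ => n) (fun _ => measurable_const) hset
    fun _ => ⟨M, Or.inl rfl⟩ with ω
  rw [numRounds, Nat.sInf_def ⟨M, Or.inl rfl⟩]
  congr

end numRounds

theorem expected_rounds_tendsto_M_of_prelog_M_general
    {Ω : Type*} [MeasurableSpace Ω] (μ : Measure Ω) [IsProbabilityMeasure μ]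
    (H : ℕ → Ω → ℝ) (hmeas : ∀ i, Measurable (H i))
    (hdist : ∀ i, Measure.map (H i) μ = expMeasure 1)
    (M : ℕ) (R : ℝ → ℝ) (hRpos : ∀ snr > (0:ℝ), 0 < R snr)
    (hprelog : Tendsto (fun snr => R snr / Real.logb 2 snr) atTop (𝓝 (M : ℝ))) :
    Tendsto
      (fun snr : ℝ => ∫ ω, (numRounds H M snr (R snr) ω : ℝ) ∂μ)
      atTop (𝓝 (M : ℝ)) := by
  set T : ℝ → ℝ := fun snr => (2 ^ (R snr / (M - 1 : ℕ)) - 1) / snr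
  set B : ℝ → Set Ω := fun snr => ⋃ i ∈ Finset.range (M - 1), H i ⁻¹' (Icc 0 (T snr))ᶜ
  have hB : Tendsto (fun snr => μ (B snr)) atTop (𝓝 0) :=
    tendsto_measure_biUnion_preimage_compl_Icc hmeas hdist fun hpos =>
      tendsto_two_rpow_sub_one_div_atTop (by exact_mod_cast hpos)
        (by exact_mod_cast (by omega : M - 1 < M)) hprelog
  refine tendsto_integral_of_eq_off_of_tendsto_measure (B := B)
    (fun _ => (measurable_from_top.comp (measurable_numRounds hmeas)).aestronglyMeasurable)
    (fun _ _ => Nat.cast_nonneg _) (fun _ _ => Nat.cast_le.2 numRounds_le)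
    (fun _ => Finset.measurableSet_biUnion _ fun i _ => hmeas i measurableSet_Icc.compl) ?_ hB
  filter_upwards [eventually_gt_atTop 0] with snr hsnr ω hω
  simp only [B, mem_iUnion, mem_preimage, mem_compl_iff, Finset.mem_range, not_exists,
    not_not] at hω
  exact_mod_cast numRounds_eq_of_forall_logb_le (hRpos snr hsnr).le fun i hi =>
    logb_one_add_mul_le hsnr (hω i hi).1 (hω i hi).2

/-- if the initial rate function has pre-log `M` (the maximum number of rounds),
then `E[X(R(SNR), SNR)] → M` as `SNR → ∞`. -/
theorem expected_rounds_tendsto_M_of_prelog_M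
    {Ω : Type*} [MeasurableSpace Ω] (μ : Measure Ω) [IsProbabilityMeasure μ]
    (H : ℕ → Ω → ℝ) (hmeas : ∀ i, Measurable (H i))
    (hindep : iIndepFun H μ)
    (hdist : ∀ i, Measure.map (H i) μ = expMeasure 1)
    (M : ℕ) (hM : 1 ≤ M) (R : ℝ → ℝ) (hRpos : ∀ snr > (0:ℝ), 0 < R snr)
    (hprelog : Tendsto (fun snr => R snr / Real.logb 2 snr) atTop (𝓝 (M : ℝ))) :
    Tendsto
      (fun snr : ℝ => ∫ ω, (numRounds H M snr (R snr) ω : ℝ) ∂μ)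
      atTop (𝓝 (M : ℝ)) :=
  expected_rounds_tendsto_M_of_prelog_M_general μ H hmeas hdist M R hRpos hprelog
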